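/- arXiv:2104.12450 — 2 statements merged into one kernel-verified Lean document; each statement's English description precedes it below -/
import Mathlib

section
/- Let (X, D) be the amalgamation of a metric d along a finite clopen partition {B_i}_{i=1}^n with metrics e_i on B_i, where each B_i has at least two points. If every (B_i, e_i) is doubling, then (X, D) is doubling. -/
/-!
Points in distinct blocks are at `D`-distance at least `d(p_i, p_j) > 0`, so `D` separates points,
and on each block it coincides with `e_i`. Passing to a subset can only shrink the diameter and
enlarge the minimal distance, so the ratio `diam/α` of the part of a finite set `F` in a block is
at most the ratio `R ≥ 1` of `F`. Hence each of the `n` blocks holds at most `(C_i + 1) R^β` points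
of `F`, for any `β` dominating every `β_i`, and `F` has at most `(∑ (C_i + 1)) R^β` points.
-/

open Set Topology

/-- `d` is a metric (as a two-variable real function) on the whole type `X`. -/
def IsMetricOn {X : Type*} (d : X → X → ℝ) : Prop :=
  (∀ x y, d x y = 0 ↔ x = y) ∧ (∀ x y, d x y = d y x) ∧ ∀ x y z, d x y ≤ d x z + d z y

/-- `d` is a metric on the subset `A` of `X`. -/
def IsMetricOnSet {X : Type*} (A : Set X) (d : X → X → ℝ) : Prop :=
  (∀ x ∈ A, ∀ y ∈ A, (d x y = 0 ↔ x = y)) ∧ (∀ x ∈ A, ∀ y ∈ A, d x y = d y x) ∧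
    ∀ x ∈ A, ∀ y ∈ A, ∀ z ∈ A, d x y ≤ d x z + d z y

/-- Diameter of a finite set with respect to the distance function `d`. -/
noncomputable def finsetDiam {X : Type*} (d : X → X → ℝ) (A : Finset X) : ℝ :=
  sSup {r : ℝ | ∃ x ∈ A, ∃ y ∈ A, d x y = r}

/-- Minimal positive distance `α_d(A)` of a finite set `A`. -/
noncomputable def finsetAlpha {X : Type*} (d : X → X → ℝ) (A : Finset X) : ℝ :=
  sInf {r : ℝ | ∃ x ∈ A, ∃ y ∈ A, x ≠ y ∧ d x y = r}

/-- `d` is doubling on the subset `A`: there are `C ≥ 1` and `β > 0` such that every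
finite subset `F` of `A` with at least two points satisfies
`card F ≤ C (diam_d F / α_d F)^β`. -/
def DoublingOn {X : Type*} (A : Set X) (d : X → X → ℝ) : Prop :=
  ∃ C : ℝ, 1 ≤ C ∧ ∃ β : ℝ, 0 < β ∧ ∀ F : Finset X, ↑F ⊆ A → 2 ≤ F.card →
    (F.card : ℝ) ≤ C * (finsetDiam d F / finsetAlpha d F) ^ β

section Metric

variable {X : Type*} {d : X → X → ℝ}

lemma IsMetricOn.isMetricOnSet_univ (h : IsMetricOn d) : IsMetricOnSet univ d :=
  ⟨fun x _ y _ => h.1 x y, fun x _ y _ => h.2.1 x y, fun x _ y _ z _ => h.2.2 x y z⟩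

lemma IsMetricOnSet.nonneg {A : Set X} (h : IsMetricOnSet A d) {x y : X}
    (hx : x ∈ A) (hy : y ∈ A) : 0 ≤ d x y := by
  have hxx : d x x = 0 := (h.1 x hx x hx).mpr rfl
  have hsymm : d y x = d x y := h.2.1 y hy x hx
  have htri := h.2.2 x hx x hx y hy
  linarith

lemma IsMetricOnSet.pos {A : Set X} (h : IsMetricOnSet A d) {x y : X}
    (hx : x ∈ A) (hy : y ∈ A) (hxy : x ≠ y) : 0 < d x y :=
  (h.nonneg hx hy).lt_of_ne fun h0 => hxy ((h.1 x hx y hy).mp h0.symm)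

end Metric

section FinsetDiam

variable {X : Type*} {d d' : X → X → ℝ} {F G : Finset X}

lemma finite_setOf_dist_mem (d : X → X → ℝ) (F : Finset X) :
    {r : ℝ | ∃ x ∈ F, ∃ y ∈ F, d x y = r}.Finite := by
  refine ((F ×ˢ F).image fun q => d q.1 q.2).finite_toSet.subset ?_
  rintro r ⟨x, hx, y, hy, rfl⟩
  exact Finset.mem_image.mpr ⟨(x, y), Finset.mem_product.mpr ⟨hx, hy⟩, rfl⟩

lemma finite_setOf_dist_ne_mem (d : X → X → ℝ) (F : Finset X) :
    {r : ℝ | ∃ x ∈ F, ∃ y ∈ F, x ≠ y ∧ d x y = r}.Finite :=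
  (finite_setOf_dist_mem d F).subset fun _ ⟨x, hx, y, hy, _, hr⟩ => ⟨x, hx, y, hy, hr⟩

lemma le_finsetDiam {x y : X} (hx : x ∈ F) (hy : y ∈ F) : d x y ≤ finsetDiam d F :=
  le_csSup (finite_setOf_dist_mem d F).bddAbove ⟨x, hx, y, hy, rfl⟩

lemma finsetDiam_le_finsetDiam_of_subset (hGF : G ⊆ F) (hG : G.Nonempty) :
    finsetDiam d G ≤ finsetDiam d F := by
  obtain ⟨x, hx⟩ := hG
  refine csSup_le ⟨d x x, x, hx, x, hx, rfl⟩ ?_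
  rintro r ⟨x, hx, y, hy, rfl⟩
  exact le_finsetDiam (hGF hx) (hGF hy)

lemma finsetAlpha_le {x y : X} (hx : x ∈ F) (hy : y ∈ F) (hxy : x ≠ y) :
    finsetAlpha d F ≤ d x y :=
  csInf_le (finite_setOf_dist_ne_mem d F).bddBelow ⟨x, hx, y, hy, hxy, rfl⟩

lemma exists_dist_eq_finsetAlpha (hF : 1 < F.card) :
    ∃ x ∈ F, ∃ y ∈ F, x ≠ y ∧ d x y = finsetAlpha d F := by
  obtain ⟨x, hx, y, hy, hxy⟩ := Finset.one_lt_card.mp hF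
  have hne : {r : ℝ | ∃ x ∈ F, ∃ y ∈ F, x ≠ y ∧ d x y = r}.Nonempty := ⟨d x y, x, hx, y, hy, hxy, rfl⟩
  exact hne.csInf_mem (finite_setOf_dist_ne_mem d F)

lemma finsetAlpha_le_finsetAlpha_of_subset (hGF : G ⊆ F) (hG : 1 < G.card) :
    finsetAlpha d F ≤ finsetAlpha d G := by
  obtain ⟨x, hx, y, hy, hxy, hα⟩ := exists_dist_eq_finsetAlpha (d := d) hG
  exact hα ▸ finsetAlpha_le (hGF hx) (hGF hy) hxy

lemma finsetAlpha_pos (hpos : ∀ x ∈ F, ∀ y ∈ F, x ≠ y → 0 < d x y) (hF : 1 < F.card) :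
    0 < finsetAlpha d F := by
  obtain ⟨x, hx, y, hy, hxy, hα⟩ := exists_dist_eq_finsetAlpha (d := d) hF
  exact hα ▸ hpos x hx y hy hxy

lemma one_le_finsetDiam_div_finsetAlpha (hpos : ∀ x ∈ F, ∀ y ∈ F, x ≠ y → 0 < d x y)
    (hF : 1 < F.card) : 1 ≤ finsetDiam d F / finsetAlpha d F := by
  obtain ⟨x, hx, y, hy, hxy, hα⟩ := exists_dist_eq_finsetAlpha (d := d) hF
  rw [one_le_div (finsetAlpha_pos hpos hF), ← hα]
  exact le_finsetDiam hx hy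

lemma finsetDiam_div_finsetAlpha_le_of_subset (hpos : ∀ x ∈ F, ∀ y ∈ F, x ≠ y → 0 < d x y)
    (hGF : G ⊆ F) (hG : 1 < G.card) :
    finsetDiam d G / finsetAlpha d G ≤ finsetDiam d F / finsetAlpha d F := by
  have hF : 1 < F.card := hG.trans_le (Finset.card_le_card hGF)
  have hαF := finsetAlpha_pos hpos hF
  have hαF_le : finsetAlpha d F ≤ finsetDiam d F :=
    (one_le_div hαF).mp (one_le_finsetDiam_div_finsetAlpha hpos hF)
  exact div_le_div₀ (hαF.le.trans hαF_le)
    (finsetDiam_le_finsetDiam_of_subset hGF (Finset.card_pos.mp (by omega)))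
    hαF (finsetAlpha_le_finsetAlpha_of_subset hGF hG)

lemma finsetDiam_congr (h : ∀ x ∈ F, ∀ y ∈ F, d x y = d' x y) :
    finsetDiam d F = finsetDiam d' F := by
  unfold finsetDiam
  congr 1
  ext r
  exact ⟨fun ⟨x, hx, y, hy, hr⟩ => ⟨x, hx, y, hy, (h x hx y hy).symm.trans hr⟩,
    fun ⟨x, hx, y, hy, hr⟩ => ⟨x, hx, y, hy, (h x hx y hy).trans hr⟩⟩

lemma finsetAlpha_congr (h : ∀ x ∈ F, ∀ y ∈ F, d x y = d' x y) :
    finsetAlpha d F = finsetAlpha d' F := by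
  unfold finsetAlpha
  congr 1
  ext r
  exact ⟨fun ⟨x, hx, y, hy, hxy, hr⟩ => ⟨x, hx, y, hy, hxy, (h x hx y hy).symm.trans hr⟩,
    fun ⟨x, hx, y, hy, hxy, hr⟩ => ⟨x, hx, y, hy, hxy, (h x hx y hy).trans hr⟩⟩

end FinsetDiam

section DoublingOn

variable {X : Type*} {d d' : X → X → ℝ} {A A' : Set X}

lemma DoublingOn.mono (h : DoublingOn A d) (hA : A' ⊆ A) : DoublingOn A' d := by
  obtain ⟨C, hC, β, hβ, hbound⟩ := h
  exact ⟨C, hC, β, hβ, fun F hF => hbound F (hF.trans hA)⟩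

lemma DoublingOn.congr (h : DoublingOn A d) (hdd' : ∀ x ∈ A, ∀ y ∈ A, d x y = d' x y) :
    DoublingOn A d' := by
  obtain ⟨C, hC, β, hβ, hbound⟩ := h
  refine ⟨C, hC, β, hβ, fun F hFA hF => ?_⟩
  have hF' : ∀ x ∈ F, ∀ y ∈ F, d x y = d' x y := fun x hx y hy => hdd' x (hFA hx) y (hFA hy)
  rw [← finsetDiam_congr hF', ← finsetAlpha_congr hF']
  exact hbound F hFA hF

/-- The `+ 1` covers a part of `F` with fewer than two points, about which the doubling bound
says nothing. -/
lemma card_filter_mem_le_of_doubling {C β γ : ℝ} (hC : 0 ≤ C) (hβ : 0 < β) (hβγ : β ≤ γ)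
    (hbound : ∀ G : Finset X, ↑G ⊆ A → 2 ≤ G.card →
      (G.card : ℝ) ≤ C * (finsetDiam d G / finsetAlpha d G) ^ β)
    [DecidablePred (· ∈ A)] {F : Finset X} (hpos : ∀ x ∈ F, ∀ y ∈ F, x ≠ y → 0 < d x y)
    (hF : 1 < F.card) :
    ((F.filter (· ∈ A)).card : ℝ) ≤ (C + 1) * (finsetDiam d F / finsetAlpha d F) ^ γ := by
  set R := finsetDiam d F / finsetAlpha d F
  have hR : 1 ≤ R := one_le_finsetDiam_div_finsetAlpha hpos hF
  have hRγ : 1 ≤ R ^ γ := Real.one_le_rpow hR (hβ.le.trans hβγ)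
  set G := F.filter (· ∈ A)
  by_cases hG : 2 ≤ G.card
  · have hGA : ↑G ⊆ A := fun x hx => (Finset.mem_filter.mp hx).2
    have hratio := finsetDiam_div_finsetAlpha_le_of_subset hpos (Finset.filter_subset _ F) hG
    have hratio₀ : 0 ≤ finsetDiam d G / finsetAlpha d G :=
      zero_le_one.trans (one_le_finsetDiam_div_finsetAlpha (fun x hx y hy =>
        hpos x (Finset.mem_of_mem_filter x hx) y (Finset.mem_of_mem_filter y hy)) hG)
    calc (G.card : ℝ) ≤ C * (finsetDiam d G / finsetAlpha d G) ^ β := hbound G hGA hG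
      _ ≤ C * R ^ γ := by
        gcongr
        exact (Real.rpow_le_rpow hratio₀ hratio hβ.le).trans
          (Real.rpow_le_rpow_of_exponent_le hR hβγ)
      _ ≤ (C + 1) * R ^ γ := by nlinarith
  · have hG1 : (G.card : ℝ) ≤ 1 := by exact_mod_cast (by omega : G.card ≤ 1)
    nlinarith

theorem DoublingOn.iUnion {ι : Type*} [Fintype ι] {A : ι → Set X}
    (hpos : ∀ x ∈ ⋃ i, A i, ∀ y ∈ ⋃ i, A i, x ≠ y → 0 < d x y)
    (h : ∀ i, DoublingOn (A i) d) : DoublingOn (⋃ i, A i) d := by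
  classical
  choose C hC β hβ hbound using h
  -- the leading `1`s keep the constants admissible when `ι` is empty
  refine ⟨1 + ∑ i, (C i + 1), ?_, 1 + ∑ i, β i, ?_, fun F hFA hF => ?_⟩
  · have := Finset.sum_nonneg fun i (_ : i ∈ Finset.univ) => (zero_le_one.trans (hC i)).trans
      (le_add_of_nonneg_right zero_le_one)
    linarith
  · have := Finset.sum_nonneg fun i (_ : i ∈ Finset.univ) => (hβ i).le
    linarith
  have hposF : ∀ x ∈ F, ∀ y ∈ F, x ≠ y → 0 < d x y := fun x hx y hy => hpos x (hFA hx) y (hFA hy)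
  set R := finsetDiam d F / finsetAlpha d F
  have hβle : ∀ i, β i ≤ 1 + ∑ j, β j := fun i =>
    (Finset.single_le_sum (fun j _ => (hβ j).le) (Finset.mem_univ i)).trans
      (le_add_of_nonneg_left zero_le_one)
  have hcover : F ⊆ Finset.univ.biUnion fun i => F.filter (· ∈ A i) := by
    intro x hx
    obtain ⟨i, hi⟩ := Set.mem_iUnion.mp (hFA hx)
    exact Finset.mem_biUnion.mpr ⟨i, Finset.mem_univ i, Finset.mem_filter.mpr ⟨hx, hi⟩⟩
  have hR : 0 ≤ R ^ (1 + ∑ i, β i) :=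
    Real.rpow_nonneg (zero_le_one.trans (one_le_finsetDiam_div_finsetAlpha hposF (by omega))) _
  calc (F.card : ℝ) ≤ ∑ i, ((F.filter (· ∈ A i)).card : ℝ) := by
        exact_mod_cast (Finset.card_le_card hcover).trans Finset.card_biUnion_le
    _ ≤ ∑ i, (C i + 1) * R ^ (1 + ∑ i, β i) := Finset.sum_le_sum fun i _ =>
        card_filter_mem_le_of_doubling (zero_le_one.trans (hC i)) (hβ i) (hβle i) (hbound i)
          hposF (by omega)
    _ ≤ (1 + ∑ i, (C i + 1)) * R ^ (1 + ∑ i, β i) := by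
        rw [← Finset.sum_mul]
        nlinarith

end DoublingOn

theorem amalgamation_doubling_general {X : Type*} {n : ℕ}
    (d : X → X → ℝ) (hd : IsMetricOn d)
    (B : Fin n → Set X)
    (hdisj : ∀ i j, i ≠ j → Disjoint (B i) (B j))
    (p : Fin n → X) (hp : ∀ i, p i ∈ B i)
    (e : Fin n → (X → X → ℝ)) (he : ∀ i, IsMetricOnSet (B i) (e i))
    (ι : X → Fin n) (hι : ∀ x, x ∈ B (ι x))
    (D : X → X → ℝ)
    (hDeq : ∀ x y, ι x = ι y → D x y = e (ι x) x y)
    (hDne : ∀ x y, ι x ≠ ι y →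
      D x y = e (ι x) x (p (ι x)) + d (p (ι x)) (p (ι y)) + e (ι y) (p (ι y)) y)
    (hdbl : ∀ i, DoublingOn (B i) (e i)) :
    DoublingOn (Set.univ : Set X) D := by
  have hDpos : ∀ x y, x ≠ y → 0 < D x y := by
    intro x y hxy
    by_cases hι' : ι x = ι y
    · rw [hDeq x y hι']
      exact (he _).pos (hι x) (hι' ▸ hι y) hxy
    · have hpp : p (ι x) ≠ p (ι y) := (hdisj _ _ hι').ne_of_mem (hp _) (hp _)
      have hx := (he _).nonneg (hι x) (hp _)
      have hy := (he _).nonneg (hp _) (hι y)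
      have hdp := hd.isMetricOnSet_univ.pos trivial trivial hpp
      rw [hDne x y hι']
      linarith
  have hfiber : ∀ i, DoublingOn {x | ι x = i} D := fun i =>
    ((hdbl i).mono fun x (hx : ι x = i) => hx ▸ hι x).congr fun x hx y hy => by
      rw [hDeq x y (hx.trans hy.symm), hx]
  have hunion : (⋃ i, {x | ι x = i}) = univ := Set.iUnion_eq_univ_iff.mpr fun x => ⟨ι x, rfl⟩
  exact hunion ▸ DoublingOn.iUnion (fun x _ y _ => hDpos x y) hfiber

/-- If every block of a finite amalgamation is doubling, so is the amalgam. -/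
theorem amalgamation_doubling {X : Type*} [TopologicalSpace X] {n : ℕ}
    (d : X → X → ℝ) (hd : IsMetricOn d)
    (B : Fin n → Set X) (hBclopen : ∀ i, IsClopen (B i))
    (htwo : ∀ i, ∃ x ∈ B i, ∃ y ∈ B i, x ≠ y)
    (hdisj : ∀ i j, i ≠ j → Disjoint (B i) (B j)) (hcover : ⋃ i, B i = univ)
    (p : Fin n → X) (hp : ∀ i, p i ∈ B i)
    (e : Fin n → (X → X → ℝ)) (he : ∀ i, IsMetricOnSet (B i) (e i))
    (ι : X → Fin n) (hι : ∀ x, x ∈ B (ι x))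
    (D : X → X → ℝ)
    (hDeq : ∀ x y, ι x = ι y → D x y = e (ι x) x y)
    (hDne : ∀ x y, ι x ≠ ι y →
      D x y = e (ι x) x (p (ι x)) + d (p (ι x)) (p (ι y)) + e (ι y) (p (ι y)) y)
    (hdbl : ∀ i, DoublingOn (B i) (e i)) :
    DoublingOn (Set.univ : Set X) D :=
  amalgamation_doubling_general d hd B hdisj p hp e he ι hι D hDeq hDne hdbl
end

section
/- Let S be a range set with countable coinitiality (there is a strictly decreasing sequence in S converging to 0) and let X be an ultrametrizable topological space. If the set of doubling metrics in Ult(X,S) is dense in (Ult(X,S), 𝒰𝒟_X^S), then X is compact. -/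
/-!
Quantizing a compatible ultrametric along the sequence `s` gives some `d ∈ Ult(X,S)` bounded by
`s 0`. If `X` is not compact, then it is either not totally bounded or not complete for `d`; in
the first case the open balls of a fixed radius, in the second the level sets of the distance to
a missing point of the completion, form a clopen partition of `X` with infinitely many pieces.
Redefining `d` to be `s 0` between different pieces keeps it in `Ult(X,S)`, and any `D` with
`𝒰𝒟(d, D) < s 0` still has an infinite equilateral set of side `s 0`, which no doubling
ultrametric has.
-/

open Set Topology Filter ENNReal

/-- The metric topology of `d` coincides with the given topology on `X`. -/
def GeneratesTopology {X : Type*} [TopologicalSpace X] (d : X → X → ℝ) : Prop :=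
  ∀ s : Set X, IsOpen s ↔ ∀ x ∈ s, ∃ ε > 0, ∀ y, d x y < ε → y ∈ s

/-- `d` is an ultrametric on the whole type `X`. -/
def IsUltrametricOn {X : Type*} (d : X → X → ℝ) : Prop :=
  (∀ x y, d x y = 0 ↔ x = y) ∧ (∀ x y, d x y = d y x) ∧
    ∀ x y z, d x y ≤ max (d x z) (d z y)

/-- Membership in `Ult(X,S)`: `d` is an `S`-valued ultrametric generating the
topology of `X`. -/
def MemUlt {X : Type*} [TopologicalSpace X] (S : Set ℝ) (d : X → X → ℝ) : Prop :=
  IsUltrametricOn d ∧ (∀ x y, d x y ∈ S) ∧ GeneratesTopology d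

/-- The ultrametric `𝒰𝒟_X^S(d,e)`: the infimum of `ε ∈ S ∪ {∞}` such that
`d ≤ max (e, ε)` and `e ≤ max (d, ε)` pointwise. -/
noncomputable def UDdist {X : Type*} (S : Set ℝ) (d e : X → X → ℝ) : ℝ≥0∞ :=
  sInf ({⊤} ∪ ENNReal.ofReal '' {ε : ℝ | ε ∈ S ∧
    ∀ x y, d x y ≤ max (e x y) ε ∧ e x y ≤ max (d x y) ε})

/-- `d` is doubling. -/
def Doubling {X : Type*} (d : X → X → ℝ) : Prop :=
  ∃ C : ℝ, 1 ≤ C ∧ ∃ β : ℝ, 0 < β ∧ ∀ F : Finset X, 2 ≤ F.card →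
    (F.card : ℝ) ≤ C * (finsetDiam d F / finsetAlpha d F) ^ β

open Metric
open UniformSpace (Completion)

section Ultrametric

variable {X : Type*} {d e : X → X → ℝ}

lemma IsUltrametricOn.dist_self (hd : IsUltrametricOn d) (x : X) : d x x = 0 :=
  (hd.1 x x).2 rfl

lemma IsUltrametricOn.nonneg (hd : IsUltrametricOn d) (x y : X) : 0 ≤ d x y := by
  have h := hd.2.2 x x y
  rw [hd.dist_self, hd.2.1 y x, max_self] at h
  exact h

variable [TopologicalSpace X]

lemma GeneratesTopology.of_forall_exists (hd : GeneratesTopology d)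
    (hde : ∀ x, ∀ ε > 0, ∃ δ > 0, ∀ y, d x y < δ → e x y < ε)
    (hed : ∀ x, ∀ ε > 0, ∃ δ > 0, ∀ y, e x y < δ → d x y < ε) : GeneratesTopology e := by
  intro s
  rw [hd s]
  refine forall₂_congr fun x _ => ⟨fun ⟨ε, hε, hs⟩ => ?_, fun ⟨ε, hε, hs⟩ => ?_⟩
  · obtain ⟨δ, hδ, h⟩ := hed x ε hε
    exact ⟨δ, hδ, fun y hy => hs y (h y hy)⟩
  · obtain ⟨δ, hδ, h⟩ := hde x ε hε
    exact ⟨δ, hδ, fun y hy => hs y (h y hy)⟩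

/-- Its topology is definitionally the given one. -/
abbrev IsUltrametricOn.toPseudoMetricSpace (hd : IsUltrametricOn d) (hg : GeneratesTopology d) :
    PseudoMetricSpace X :=
  PseudoMetricSpace.ofDistTopology d hd.dist_self hd.2.1
    (fun x y z => (hd.2.2 x z y).trans <| max_le
      (le_add_of_nonneg_right (hd.nonneg y z)) (le_add_of_nonneg_left (hd.nonneg x y))) hg

end Ultrametric

section Quantize

variable {X : Type*} {s : ℕ → ℝ}

lemma StrictAnti.pos_of_tendsto_zero (hs : StrictAnti s) (hlim : Tendsto s atTop (𝓝 0)) (n : ℕ) :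
    0 < s n :=
  (hs.antitone.le_of_tendsto hlim (n + 1)).trans_lt (hs n.lt_succ_self)

open Classical in
/-- For decreasing `s`, the largest term of `s` strictly below `t`, or `0` if there is none. -/
noncomputable def quantize (s : ℕ → ℝ) (t : ℝ) : ℝ :=
  if h : ∃ n, s n < t then s (Nat.find h) else 0

lemma quantize_mem {S : Set ℝ} (hS0 : (0 : ℝ) ∈ S) (hsS : ∀ n, s n ∈ S) (t : ℝ) :
    quantize s t ∈ S := by
  unfold quantize
  split_ifs
  exacts [hsS _, hS0]

lemma quantize_le_self {t : ℝ} (ht : 0 ≤ t) : quantize s t ≤ t := by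
  unfold quantize
  split_ifs with h
  exacts [(Nat.find_spec h).le, ht]

lemma quantize_le_head (hs : StrictAnti s) (hs0 : 0 < s 0) (t : ℝ) : quantize s t ≤ s 0 := by
  unfold quantize
  split_ifs
  exacts [hs.antitone (Nat.zero_le _), hs0.le]

lemma quantize_mono (hs : StrictAnti s) (hpos : ∀ n, 0 < s n) : Monotone (quantize s) := by
  intro a b hab
  unfold quantize
  split_ifs with ha hb hb
  · exact hs.antitone (Nat.find_mono fun n hn => hn.trans_le hab)
  · exact absurd (ha.imp fun n hn => hn.trans_le hab) hb
  · exact (hpos _).le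
  · exact le_rfl

lemma le_of_quantize_lt (hs : StrictAnti s) {t : ℝ} {m : ℕ} (h : quantize s t < s m) :
    t ≤ s m := by
  unfold quantize at h
  split_ifs at h with he
  · exact not_lt.1 (Nat.find_min he (hs.lt_iff_gt.1 h))
  · exact not_lt.1 fun hm => he ⟨m, hm⟩

lemma quantize_eq_zero_iff (hs : StrictAnti s) (hlim : Tendsto s atTop (𝓝 0)) {t : ℝ}
    (ht : 0 ≤ t) : quantize s t = 0 ↔ t = 0 := by
  have hpos := hs.pos_of_tendsto_zero hlim
  refine ⟨fun h => le_antisymm ?_ ht, fun h => ?_⟩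
  · exact ge_of_tendsto' hlim fun n => le_of_quantize_lt hs (h ▸ hpos n)
  · rw [quantize, dif_neg]
    exact fun ⟨n, hn⟩ => (hpos n).not_gt (h ▸ hn)

variable [TopologicalSpace X] {ρ : X → X → ℝ}

theorem memUlt_quantize {S : Set ℝ} (hS0 : (0 : ℝ) ∈ S) (hs : StrictAnti s)
    (hsS : ∀ n, s n ∈ S) (hlim : Tendsto s atTop (𝓝 0)) (hρ : IsUltrametricOn ρ)
    (hρg : GeneratesTopology ρ) : MemUlt S fun x y => quantize s (ρ x y) := by
  have hpos := hs.pos_of_tendsto_zero hlim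
  have hmono := quantize_mono hs hpos
  refine ⟨⟨fun x y => ?_, fun x y => congrArg _ (hρ.2.1 x y), fun x y z => ?_⟩, fun x y => ?_, ?_⟩
  · rw [quantize_eq_zero_iff hs hlim (hρ.nonneg x y), hρ.1]
  · rw [← hmono.map_max]
    exact hmono (hρ.2.2 x y z)
  · exact quantize_mem hS0 hsS _
  · refine hρg.of_forall_exists (fun x ε hε => ⟨ε, hε, fun y hy => ?_⟩) fun x ε hε => ?_
    · exact (quantize_le_self (hρ.nonneg x y)).trans_lt hy
    · obtain ⟨m, hm⟩ := (hlim.eventually_lt_const hε).exists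
      exact ⟨s m, hpos m, fun y hy => (le_of_quantize_lt hs hy).trans_lt hm⟩

end Quantize

section FiberDist

variable {X β : Type*} {d : X → X → ℝ} {c : X → β} {r : ℝ}

open Classical in
noncomputable def fiberDist (d : X → X → ℝ) (c : X → β) (r : ℝ) (x y : X) : ℝ :=
  if c x = c y then d x y else r

lemma fiberDist_of_ne {x y : X} (h : c x ≠ c y) : fiberDist d c r x y = r :=
  if_neg h

lemma le_fiberDist (hle : ∀ x y, d x y ≤ r) (x y : X) : d x y ≤ fiberDist d c r x y := by
  unfold fiberDist
  split_ifs
  exacts [le_rfl, hle x y]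

lemma IsUltrametricOn.fiberDist (hd : IsUltrametricOn d) (hle : ∀ x y, d x y ≤ r) (hr : 0 < r) :
    IsUltrametricOn (fiberDist d c r) := by
  refine ⟨fun x y => ?_, fun x y => ?_, fun x y z => ?_⟩
  · unfold _root_.fiberDist
    split_ifs with h
    · exact hd.1 x y
    · exact ⟨fun h0 => absurd h0 hr.ne', fun hxy => absurd (congrArg c hxy) h⟩
  · unfold _root_.fiberDist
    by_cases h : c x = c y
    · rw [if_pos h, if_pos h.symm, hd.2.1]
    · rw [if_neg h, if_neg (Ne.symm h)]
  · by_cases hxy : c x = c y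
    · rw [_root_.fiberDist, if_pos hxy]
      exact (hd.2.2 x y z).trans (max_le_max (le_fiberDist hle x z) (le_fiberDist hle z y))
    · rw [fiberDist_of_ne hxy]
      by_cases hxz : c x = c z
      · exact le_max_of_le_right (fiberDist_of_ne fun h => hxy (hxz.trans h)).ge
      · exact le_max_of_le_left (fiberDist_of_ne hxz).ge

variable [TopologicalSpace X]

lemma GeneratesTopology.fiberDist (hd : GeneratesTopology d) (hc : IsLocallyConstant c)
    (hle : ∀ x y, d x y ≤ r) : GeneratesTopology (fiberDist d c r) := by
  refine hd.of_forall_exists (fun x ε hε => ?_) fun x ε hε =>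
    ⟨ε, hε, fun y hy => (le_fiberDist hle x y).trans_lt hy⟩
  obtain ⟨δ, hδ, hfiber⟩ := (hd _).1 (hc.isOpen_fiber (c x)) x rfl
  refine ⟨min ε δ, lt_min hε hδ, fun y hy => ?_⟩
  rw [_root_.fiberDist, if_pos (hfiber y (hy.trans_le (min_le_right _ _))).symm]
  exact hy.trans_le (min_le_left _ _)

theorem MemUlt.fiberDist {S : Set ℝ} (hd : MemUlt S d) (hc : IsLocallyConstant c)
    (hle : ∀ x y, d x y ≤ r) (hrS : r ∈ S) (hr : 0 < r) : MemUlt S (fiberDist d c r) := by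
  refine ⟨hd.1.fiberDist hle hr, fun x y => ?_, hd.2.2.fiberDist hc hle⟩
  unfold _root_.fiberDist
  split_ifs
  exacts [hd.2.1 x y, hrS]

end FiberDist

section Doubling

variable {X : Type*} {S : Set ℝ} {d D : X → X → ℝ} {r : ℝ}

lemma apply_eq_of_UDdist_lt (h : UDdist S d D < ENNReal.ofReal r) {x y : X} (hxy : d x y = r) :
    D x y = r := by
  obtain ⟨_, hmem, hlt⟩ := sInf_lt_iff.1 h
  rcases hmem with rfl | ⟨ε, ⟨-, hε⟩, rfl⟩
  · exact absurd hlt not_top_lt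
  have hεr := ((ENNReal.ofReal_lt_ofReal_iff').1 hlt).1
  obtain ⟨hdD, hDd⟩ := hε x y
  rw [hxy] at hdD hDd
  exact le_antisymm (hDd.trans (max_eq_left hεr.le).le)
    (le_of_not_gt fun hD => hdD.not_gt (max_lt hD hεr))

lemma finsetDiam_eq (hD0 : ∀ x, D x x = 0) (hr : 0 ≤ r) {F : Finset X}
    (hF : (F : Set X).Pairwise fun a b => D a b = r) (hF1 : 1 < F.card) : finsetDiam D F = r := by
  obtain ⟨a, ha, b, hb, hab⟩ := Finset.one_lt_card.1 hF1
  refine IsGreatest.csSup_eq ⟨⟨a, ha, b, hb, hF ha hb hab⟩, ?_⟩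
  rintro _ ⟨x, hx, y, hy, rfl⟩
  rcases eq_or_ne x y with rfl | hxy
  · exact (hD0 x).trans_le hr
  · exact (hF hx hy hxy).le

lemma finsetAlpha_eq {F : Finset X} (hF : (F : Set X).Pairwise fun a b => D a b = r)
    (hF1 : 1 < F.card) : finsetAlpha D F = r := by
  obtain ⟨a, ha, b, hb, hab⟩ := Finset.one_lt_card.1 hF1
  refine IsLeast.csInf_eq ⟨⟨a, ha, b, hb, hab, hF ha hb hab⟩, ?_⟩
  rintro _ ⟨x, hx, y, hy, hxy, rfl⟩
  exact (hF hx hy hxy).ge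

lemma Doubling.finite_of_pairwise_eq (hD : Doubling D) (hD0 : ∀ x, D x x = 0) (hr : 0 < r)
    {A : Set X} (hA : A.Pairwise fun a b => D a b = r) : A.Finite := by
  by_contra hinf
  obtain ⟨C, -, β, -, hdbl⟩ := hD
  obtain ⟨F, hFA, hcard⟩ := Set.Infinite.exists_subset_card_eq hinf (⌈C⌉₊ + 2)
  have hF := hA.mono hFA
  have h := hdbl F (by omega)
  rw [finsetDiam_eq hD0 hr.le hF (by omega), finsetAlpha_eq hF (by omega), div_self hr.ne',
    Real.one_rpow, mul_one, hcard] at h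
  push_cast at h
  linarith [Nat.le_ceil C]

end Doubling

section NonCompact

variable {X : Type*} [PseudoMetricSpace X] [IsUltrametricDist X]

instance : IsUltrametricDist (Completion X) :=
  ⟨fun x y z => Completion.induction_on₃ x y z
    (isClosed_le (by fun_prop) (by fun_prop)) fun a b c => by
      simpa only [Completion.dist_eq] using IsUltrametricDist.dist_triangle_max a b c⟩

lemma exists_isLocallyConstant_infinite_range_of_not_totallyBounded
    (h : ¬ TotallyBounded (univ : Set X)) :
    ∃ c : X → Set X, IsLocallyConstant c ∧ (range c).Infinite := by
  by_contra! hfin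
  refine h (totallyBounded_of_finite_discretization fun ε hε => ?_)
  have hball : IsLocallyConstant fun x : X => ball x ε :=
    (IsLocallyConstant.iff_exists_open _).2 fun x => ⟨ball x ε, isOpen_ball, mem_ball_self hε,
      fun y hy => (IsUltrametricDist.ball_eq_of_mem hy).symm⟩
  refine ⟨_, (hfin _ hball).fintype, fun x => ⟨ball x.1 ε, x.1, rfl⟩, fun x y hxy => ?_⟩
  have hy : (y : X) ∈ ball (x : X) ε := by
    rw [show ball (x : X) ε = ball (y : X) ε from congrArg Subtype.val hxy]
    exact mem_ball_self hε
  exact mem_ball'.1 hy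

lemma exists_isLocallyConstant_infinite_range_of_not_completeSpace (h : ¬ CompleteSpace X) :
    ∃ c : X → Set X, IsLocallyConstant c ∧ (range c).Infinite := by
  obtain ⟨p, hp⟩ : ∃ p : Completion X, p ∉ range ((↑) : X → Completion X) := by
    by_contra! hsurj
    refine h ((completeSpace_iff_isComplete_range (Completion.isUniformInducing_coe X)).2 ?_)
    rw [eq_univ_of_forall hsurj]
    exact isComplete_univ
  set f : X → ℝ := fun y => dist (y : Completion X) p
  have hf_pos (y : X) : 0 < f y := dist_pos.2 fun hy => hp ⟨y, hy⟩
  have hf : IsLocallyConstant f := IsLocallyConstant.iff_isOpen_fiber.2 fun t => by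
    rcases eq_or_ne t 0 with rfl | ht
    · convert isOpen_empty
      exact eq_empty_of_forall_notMem fun y hy => (hf_pos y).ne' hy
    · exact (IsUltrametricDist.isOpen_sphere p ht).preimage (Completion.continuous_coe X)
  have hf_inf : (range f).Infinite := fun hfin => by
    have h0 : (0 : ℝ) ∈ closure (range f) := Metric.mem_closure_iff.2 fun ε hε => by
      obtain ⟨y, hy⟩ := Completion.denseRange_coe.exists_dist_lt p hε
      refine ⟨f y, mem_range_self y, ?_⟩
      rw [Real.dist_eq, zero_sub, abs_neg, abs_of_pos (hf_pos y)]
      rwa [dist_comm] at hy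
    obtain ⟨y, hy⟩ := hfin.isClosed.closure_eq ▸ h0
    exact (hf_pos y).ne' hy
  refine ⟨fun y => f ⁻¹' {f y}, hf.comp (fun t => f ⁻¹' {t}), ?_⟩
  rw [range_comp' (fun t => f ⁻¹' {t}) f]
  refine hf_inf.image fun _ ⟨y, hy⟩ _ _ heq => ?_
  subst hy
  have hy : y ∈ f ⁻¹' {f y} := rfl
  rwa [heq] at hy

theorem exists_isLocallyConstant_infinite_range (h : ¬ CompactSpace X) :
    ∃ c : X → Set X, IsLocallyConstant c ∧ (range c).Infinite := by
  by_cases htb : TotallyBounded (univ : Set X)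
  · refine exists_isLocallyConstant_infinite_range_of_not_completeSpace fun _ => h ⟨?_⟩
    exact isCompact_iff_totallyBounded_isComplete.2 ⟨htb, isComplete_univ⟩
  · exact exists_isLocallyConstant_infinite_range_of_not_totallyBounded htb

end NonCompact

theorem compact_of_dense_doubling_ultrametrics_general {X : Type*} [TopologicalSpace X]
    (S : Set ℝ) (hS0 : (0 : ℝ) ∈ S)
    (hco : ∃ s : ℕ → ℝ, StrictAnti s ∧ (∀ n, s n ∈ S) ∧ Tendsto s atTop (nhds 0))
    (hultra : ∃ ρ : X → X → ℝ, IsUltrametricOn ρ ∧ GeneratesTopology ρ)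
    (hdense : ∀ d : X → X → ℝ, MemUlt S d → ∀ ε : ℝ≥0∞, 0 < ε →
      ∃ D : X → X → ℝ, MemUlt S D ∧ Doubling D ∧ UDdist S d D < ε) :
    CompactSpace X := by
  obtain ⟨s, hs, hsS, hlim⟩ := hco
  obtain ⟨ρ, hρ, hρg⟩ := hultra
  have hs0 : 0 < s 0 := hs.pos_of_tendsto_zero hlim 0
  have hd := memUlt_quantize hS0 hs hsS hlim hρ hρg
  have hd_le (x y : X) : quantize s (ρ x y) ≤ s 0 := quantize_le_head hs hs0 _
  by_contra hX
  let _ := hd.1.toPseudoMetricSpace hd.2.2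
  have : IsUltrametricDist X := ⟨fun x y z => hd.1.2.2 x z y⟩
  obtain ⟨c, hc, hc_inf⟩ := exists_isLocallyConstant_infinite_range hX
  obtain ⟨D, hD, hD_dbl, hdD⟩ := hdense _ (hd.fiberDist hc hd_le (hsS 0) hs0)
    (ENNReal.ofReal (s 0)) (ENNReal.ofReal_pos.2 hs0)
  obtain ⟨A, hA, hcA⟩ := exists_image_eq_and_injOn univ c
  have hA_inf : A.Infinite := Infinite.of_image c (by rwa [hA, image_univ])
  refine hA_inf (hD_dbl.finite_of_pairwise_eq hD.1.dist_self hs0 fun a ha b hb hab => ?_)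
  exact apply_eq_of_UDdist_lt hdD (fiberDist_of_ne fun h => hab (hcA ha hb h))

/-- If `S` has countable coinitiality, `X` is ultrametrizable and the doubling
ultrametrics are dense in `(Ult(X,S), 𝒰𝒟_X^S)`, then `X` is compact. -/
theorem compact_of_dense_doubling_ultrametrics {X : Type*} [TopologicalSpace X]
    (S : Set ℝ) (hSsub : S ⊆ Set.Ici 0) (hS0 : (0 : ℝ) ∈ S)
    (hco : ∃ s : ℕ → ℝ, StrictAnti s ∧ (∀ n, s n ∈ S) ∧ Tendsto s atTop (nhds 0))
    (hultra : ∃ ρ : X → X → ℝ, IsUltrametricOn ρ ∧ GeneratesTopology ρ)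
    (hdense : ∀ d : X → X → ℝ, MemUlt S d → ∀ ε : ℝ≥0∞, 0 < ε →
      ∃ D : X → X → ℝ, MemUlt S D ∧ Doubling D ∧ UDdist S d D < ε) :
    CompactSpace X :=
  compact_of_dense_doubling_ultrametrics_general S hS0 hco hultra hdense
end
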